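/- Let M be a laminar matroid and e an element of its ground set. Then M \ e (the deletion of e) is a laminar matroid. -/

import Mathlib

open Set Matroid

variable {α : Type*}

/-- A circuit: a minimal dependent set. -/
def Matroid.IsCircuit' (M : Matroid α) (C : Set α) : Prop :=
  M.Dep C ∧ ∀ D, D ⊂ C → M.Indep D

/-- The circuit characterization of laminar matroids. -/
def Matroid.IsLaminar (M : Matroid α) : Prop :=
  ∀ C₁ C₂, M.IsCircuit' C₁ → M.IsCircuit' C₂ → (C₁ ∩ C₂).Nonempty →
    M.closure C₁ ⊆ M.closure C₂ ∨ M.closure C₂ ⊆ M.closure C₁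

/-- A laminar family: any two intersecting members are comparable. -/
def IsLaminarFamily (𝒜 : Set (Set α)) : Prop :=
  ∀ A ∈ 𝒜, ∀ B ∈ 𝒜, (A ∩ B).Nonempty → A ⊆ B ∨ B ⊆ A

/-- `M` is presented by the laminar family `𝒜` with capacities `c`. -/
def Matroid.IsLaminarPresBy (M : Matroid α) (E : Set α) (𝒜 : Set (Set α)) (c : Set α → ℕ) :
    Prop :=
  M.E = E ∧ ∀ I, M.Indep I ↔ I ⊆ E ∧ ∀ A ∈ 𝒜, (I ∩ A).ncard ≤ c A

/-- `M` has some laminar presentation (on its own ground set); this captures being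
isomorphic to a laminar matroid `M(E, 𝒜, c)`. -/
def Matroid.HasLaminarPres (M : Matroid α) : Prop :=
  ∃ (𝒜 : Set (Set α)) (c : Set α → ℕ), IsLaminarFamily 𝒜 ∧ (∀ A ∈ 𝒜, A ⊆ M.E) ∧
    M.IsLaminarPresBy M.E 𝒜 c

/-- Deletion of a set of elements. -/
def Matroid.del (M : Matroid α) (X : Set α) : Matroid α := M ↾ (M.E \ X)

/-- Contraction of a set of elements, defined via duality. -/
def Matroid.con (M : Matroid α) (X : Set α) : Matroid α := (M✶ ↾ (M.E \ X))✶

/-- `IsMinor M N` means `N` is obtained from `M` by a sequence of single-element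
deletions and contractions. -/
inductive IsMinor : Matroid α → Matroid α → Prop
  | refl (M : Matroid α) : IsMinor M M
  | del (M N : Matroid α) (e : α) : IsMinor M N → IsMinor M (N.del {e})
  | con (M N : Matroid α) (e : α) : IsMinor M N → IsMinor M (N.con {e})

namespace Matroid

variable {M : Matroid α} {C R : Set α}

lemma isCircuit'_iff_isCircuit : M.IsCircuit' C ↔ M.IsCircuit C :=
  isCircuit_iff_forall_ssubset.symm

lemma restrict_isCircuit'_iff (hR : R ⊆ M.E) :
    (M ↾ R).IsCircuit' C ↔ M.IsCircuit' C ∧ C ⊆ R := by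
  simp only [isCircuit'_iff_isCircuit, restrict_isCircuit_iff hR]

lemma IsLaminar.restrict (hM : M.IsLaminar) (hR : R ⊆ M.E) : (M ↾ R).IsLaminar := by
  intro C₁ C₂ hC₁ hC₂ hne
  rw [restrict_isCircuit'_iff hR] at hC₁ hC₂
  rw [restrict_closure_eq M hC₁.2 hR, restrict_closure_eq M hC₂.2 hR]
  exact (hM C₁ C₂ hC₁.1 hC₂.1 hne).imp (inter_subset_inter_left R) (inter_subset_inter_left R)

end Matroid

theorem stmt_9_general (M : Matroid α) (hM : M.IsLaminar)
    (e : α) : (M.del {e}).IsLaminar :=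
  hM.restrict sdiff_subset

theorem stmt_9 (M : Matroid α) (hfin : M.E.Finite) (hM : M.IsLaminar)
    (e : α) (he : e ∈ M.E) : (M.del {e}).IsLaminar :=
  stmt_9_general M hM e
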